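/- EnumGreedy_1 is not a (1 − e^{−1})-approximation: For every real N ≥ 8, consider the MSK instance with E = {1, 2, 3}, w(1) = w(2) = N, w(3) = 1, W = 2N, and f(S) = N·|S ∩ {1,2}| + 2·|S ∩ {3}| (a modular, hence monotone submodular, non-negative function). The optimal feasible value is f({1,2}) = 2N, yet for every G ⊆ E with |G| ≤ 1 and w(G) ≤ W and every greedy execution on (E, f_G, w, W − w(G)) with output A, it holds that f(G ∪ A) ≤ N + 2 < (1 − e^{−1})·2N. -/

import Mathlib

open Finset

variable {α : Type*}

/-- A set function `f` is submodular on ground set `E`. -/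
def SubmodularOn [DecidableEq α] (E : Finset α) (f : Finset α → ℝ) : Prop :=
  ∀ A B : Finset α, A ⊆ B → B ⊆ E → ∀ e ∈ E, e ∉ B →
    f (insert e B) - f B ≤ f (insert e A) - f A

/-- A set function `f` is monotone on ground set `E`. -/
def MonotoneOnSets (E : Finset α) (f : Finset α → ℝ) : Prop :=
  ∀ S T : Finset α, S ⊆ T → T ⊆ E → f S ≤ f T

/-- A set function `f` is non-negative on ground set `E`. -/
def NonnegOn (E : Finset α) (f : Finset α → ℝ) : Prop :=
  ∀ S : Finset α, S ⊆ E → 0 ≤ f S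

/-- Total weight of a set. -/
def wt (w : α → ℝ) (S : Finset α) : ℝ := ∑ e ∈ S, w e

/-- Marginal value `f_A(S) = f(A ∪ S) - f(A)`. -/
def marginal [DecidableEq α] (f : Finset α → ℝ) (A S : Finset α) : ℝ := f (A ∪ S) - f A

/-- A greedy execution on the MSK instance `(E, f, w, W)`: an ordering `e_1, …, e_n`
of the elements of `E` (here `order`, 0-indexed) together with sets
`sol 0 = ∅ ⊆ sol 1 ⊆ … ⊆ sol n` such that at every step the considered element maximizes
the marginal density among the remaining elements, and it is added iff it fits. -/
structure GreedyExec [DecidableEq α] (E : Finset α) (f : Finset α → ℝ) (w : α → ℝ)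
    (W : ℝ) where
  order : List α
  nodup : order.Nodup
  ground : order.toFinset = E
  sol : ℕ → Finset α
  sol_zero : sol 0 = ∅
  greedy_max : ∀ (i : ℕ) (hi : i < order.length), ∀ e ∈ order.drop i,
    marginal f (sol i) {e} / w e ≤
      marginal f (sol i) {order.get ⟨i, hi⟩} / w (order.get ⟨i, hi⟩)
  step_add : ∀ (i : ℕ) (hi : i < order.length),
    wt w (sol i) + w (order.get ⟨i, hi⟩) ≤ W →
      sol (i + 1) = insert (order.get ⟨i, hi⟩) (sol i)
  step_skip : ∀ (i : ℕ) (hi : i < order.length),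
    W < wt w (sol i) + w (order.get ⟨i, hi⟩) → sol (i + 1) = sol i

/-- The output of a greedy execution. -/
def GreedyExec.out [DecidableEq α] {E : Finset α} {f : Finset α → ℝ} {w : α → ℝ} {W : ℝ}
    (g : GreedyExec E f w W) : Finset α := g.sol g.order.length

/-! The objective is modular, so at the first greedy step the marginal density of `3` is
`2 / 1` while that of `1` or `2` is at most `N / N = 1`. Hence if `3 ∉ G` greedy takes `3`
first (it fits, as `w(G) ≤ N`), and in every case `3 ∈ G ∪ A`. As `w(G ∪ A) ≤ 2N < w({1, 2, 3})`,
the set `G ∪ A` then misses one of the heavy elements `1, 2`, so its value is at most `N + 2`.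
Finally `e⁻¹ < 3/8` gives `(1 - e⁻¹)·2N > 5N/4 ≥ N + 2` for `N ≥ 8`. -/

namespace GreedyExec

variable [DecidableEq α] {E : Finset α} {f : Finset α → ℝ} {w : α → ℝ} {W : ℝ}
  (g : GreedyExec E f w W)

lemma sol_subset_sol_succ {i : ℕ} (hi : i < g.order.length) : g.sol i ⊆ g.sol (i + 1) := by
  rcases le_or_gt (wt w (g.sol i) + w (g.order.get ⟨i, hi⟩)) W with h | h
  · rw [g.step_add i hi h]
    exact subset_insert _ _
  · rw [g.step_skip i hi h]

lemma sol_subset_out {i : ℕ} (hi : i ≤ g.order.length) : g.sol i ⊆ g.out := by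
  induction hi using Nat.decreasingInduction with
  | self => exact Subset.rfl
  | of_succ k hk ih => exact (g.sol_subset_sol_succ hk).trans ih

lemma get_mem_ground (i : ℕ) (hi : i < g.order.length) : g.order.get ⟨i, hi⟩ ∈ E := by
  have := List.mem_toFinset.mpr (g.order.get_mem ⟨i, hi⟩)
  rwa [g.ground] at this

lemma sol_subset_ground {i : ℕ} (hi : i ≤ g.order.length) : g.sol i ⊆ E := by
  induction i with
  | zero => simp [g.sol_zero]
  | succ i ih =>
    replace ih := ih (Nat.le_of_succ_le hi)
    rcases le_or_gt (wt w (g.sol i) + w (g.order.get ⟨i, hi⟩)) W with h | h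
    · rw [g.step_add i hi h]
      exact insert_subset (g.get_mem_ground i hi) ih
    · rwa [g.step_skip i hi h]

lemma wt_sol_le (hW : 0 ≤ W) {i : ℕ} (hi : i ≤ g.order.length) : wt w (g.sol i) ≤ W := by
  induction i with
  | zero => simpa [g.sol_zero, wt] using hW
  | succ i ih =>
    replace ih := ih (Nat.le_of_succ_le hi)
    rcases le_or_gt (wt w (g.sol i) + w (g.order.get ⟨i, hi⟩)) W with h | h
    · rw [g.step_add i hi h, wt]
      by_cases hmem : g.order.get ⟨i, hi⟩ ∈ g.sol i
      · rwa [insert_eq_of_mem hmem]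
      · rw [sum_insert hmem, add_comm]
        exact h
    · rwa [g.step_skip i hi h]

lemma out_subset_ground : g.out ⊆ E :=
  g.sol_subset_ground le_rfl

lemma wt_out_le (hW : 0 ≤ W) : wt w g.out ≤ W :=
  g.wt_sol_le hW le_rfl

lemma get_zero_eq_of_density_lt {e : α} (he : e ∈ E)
    (hbest : ∀ x ∈ E, x ≠ e → marginal f ∅ {x} / w x < marginal f ∅ {e} / w e)
    (h0 : 0 < g.order.length) : g.order.get ⟨0, h0⟩ = e := by
  by_contra hne
  have hle := g.greedy_max 0 h0 e (by rwa [List.drop_zero, ← List.mem_toFinset, g.ground])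
  rw [g.sol_zero] at hle
  exact hle.not_gt (hbest _ (g.get_mem_ground 0 h0) hne)

lemma mem_out_of_density_lt {e : α} (he : e ∈ E) (hfit : w e ≤ W)
    (hbest : ∀ x ∈ E, x ≠ e → marginal f ∅ {x} / w x < marginal f ∅ {e} / w e) :
    e ∈ g.out := by
  have h0 : 0 < g.order.length :=
    List.length_pos_of_mem (by rwa [← List.mem_toFinset, g.ground])
  have hfirst := g.get_zero_eq_of_density_lt he hbest h0
  have hsol : g.sol 1 = {e} := by
    have hfits : wt w (g.sol 0) + w (g.order.get ⟨0, h0⟩) ≤ W := by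
      rw [g.sol_zero, hfirst]
      simpa [wt] using hfit
    rw [g.step_add 0 h0 hfits, g.sol_zero, hfirst]
    rfl
  exact g.sol_subset_out h0 (hsol ▸ mem_singleton_self e)

end GreedyExec

lemma wt_union_le [DecidableEq α] {w : α → ℝ} {S T : Finset α} (hw : ∀ e ∈ S, 0 ≤ w e) :
    wt w (S ∪ T) ≤ wt w S + wt w T := by
  rw [wt, wt, wt, ← sum_union_inter]
  exact le_add_of_nonneg_right (sum_nonneg fun e he => hw e (mem_inter.mp he).1)

lemma wt_le_of_card_le_one {w : α → ℝ} {S : Finset α} {c : ℝ} (hS : #S ≤ 1) (hc : 0 ≤ c)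
    (hw : ∀ e ∈ S, w e ≤ c) : wt w S ≤ c :=
  calc wt w S ≤ #S • c := sum_le_card_nsmul _ _ _ hw
    _ ≤ c := by
      rw [nsmul_eq_mul]
      exact mul_le_of_le_one_left hc (by exact_mod_cast hS)

lemma exp_neg_one_lt_three_eighths : Real.exp (-1) < 3 / 8 :=
  Real.exp_neg_one_lt_d9.trans (by norm_num)

lemma card_union_inter_add_card_inter_inter [DecidableEq α] (A B T : Finset α) :
    #((A ∪ B) ∩ T) + #((A ∩ B) ∩ T) = #(A ∩ T) + #(B ∩ T) := by
  rw [union_inter_distrib_right, inter_inter_distrib_right, card_union_add_card_inter]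

def exampleObjective (N : ℝ) (S : Finset ℕ) : ℝ :=
  N * #(S ∩ {1, 2}) + 2 * #(S ∩ {3})

namespace exampleObjective

variable {N : ℝ}

lemma union_add_inter (A B : Finset ℕ) :
    exampleObjective N (A ∪ B) + exampleObjective N (A ∩ B) =
      exampleObjective N A + exampleObjective N B := by
  have h₁ : (#((A ∪ B) ∩ {1, 2}) + #((A ∩ B) ∩ {1, 2}) : ℝ) =
      #(A ∩ {1, 2}) + #(B ∩ {1, 2}) := by
    exact_mod_cast card_union_inter_add_card_inter_inter A B {1, 2}
  have h₂ : (#((A ∪ B) ∩ {3}) + #((A ∩ B) ∩ {3}) : ℝ) = #(A ∩ {3}) + #(B ∩ {3}) := by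
    exact_mod_cast card_union_inter_add_card_inter_inter A B {3}
  unfold exampleObjective
  linear_combination N * h₁ + 2 * h₂

lemma nonneg (hN : 0 ≤ N) (S : Finset ℕ) : 0 ≤ exampleObjective N S := by
  unfold exampleObjective
  positivity

@[simp] lemma empty : exampleObjective N ∅ = 0 := by simp [exampleObjective]
@[simp] lemma singleton_one : exampleObjective N {1} = N := by simp [exampleObjective]
@[simp] lemma singleton_two : exampleObjective N {2} = N := by simp [exampleObjective]
@[simp] lemma singleton_three : exampleObjective N {3} = 2 := by simp [exampleObjective]
lemma pair : exampleObjective N {1, 2} = 2 * N := by simp [exampleObjective]; ring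

lemma union_singleton_sub_le (hN : 0 ≤ N) (G : Finset ℕ) {x : ℕ}
    (hx : x ∈ ({1, 2} : Finset ℕ)) :
    exampleObjective N (G ∪ {x}) - exampleObjective N G ≤ N := by
  have hx' : exampleObjective N {x} = N := by
    rcases mem_insert.mp hx with rfl | hx <;> simp_all
  linarith [union_add_inter (N := N) G {x}, nonneg hN (G ∩ {x})]

lemma union_three_sub {G : Finset ℕ} (h3 : 3 ∉ G) :
    exampleObjective N (G ∪ {3}) - exampleObjective N G = 2 := by
  have := union_add_inter (N := N) G {3}
  rw [inter_singleton_of_notMem h3, empty, add_zero, singleton_three] at this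
  linarith

lemma le_of_not_pair_subset (hN : 0 ≤ N) {S : Finset ℕ} (hS : ¬{1, 2} ⊆ S) :
    exampleObjective N S ≤ N + 2 := by
  have h12 : #(S ∩ {1, 2}) ≤ 1 := by
    have : S ∩ {1, 2} ⊂ {1, 2} :=
      ⟨inter_subset_right, fun h => hS (h.trans inter_subset_left)⟩
    simpa using card_lt_card this
  have h3 : #(S ∩ {3}) ≤ 1 := by
    simpa using card_le_card (inter_subset_right (s₁ := S) (s₂ := {3}))
  have h12' : (#(S ∩ {1, 2}) : ℝ) ≤ 1 := by exact_mod_cast h12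
  have h3' : (#(S ∩ {3}) : ℝ) ≤ 1 := by exact_mod_cast h3
  unfold exampleObjective
  nlinarith

end exampleObjective

section ExampleInstance

variable {N : ℝ} {w : ℕ → ℝ}

lemma not_pair_subset_of_three_mem (hw1 : w 1 = N) (hw2 : w 2 = N) (hw3 : w 3 = 1)
    {S : Finset ℕ} (hS : S ⊆ {1, 2, 3}) (h3 : 3 ∈ S) (hwS : wt w S ≤ 2 * N) :
    ¬{1, 2} ⊆ S := by
  intro h12
  obtain rfl : S = {1, 2, 3} := hS.antisymm (insert_subset (h12 (by simp)) <|
    insert_subset (h12 (by simp)) (singleton_subset_iff.mpr h3))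
  simp [wt, hw1, hw2, hw3] at hwS
  linarith

lemma exampleObjective_le_of_wt_le (hN : 2 ≤ N) (hw1 : w 1 = N) (hw2 : w 2 = N)
    (hw3 : w 3 = 1) {S : Finset ℕ} (hS : S ⊆ {1, 2, 3}) (hwS : wt w S ≤ 2 * N) :
    exampleObjective N S ≤ 2 * N := by
  by_cases h3 : 3 ∈ S
  · have := exampleObjective.le_of_not_pair_subset (N := N) (by linarith)
      (not_pair_subset_of_three_mem hw1 hw2 hw3 hS h3 hwS)
    linarith
  · have h12 : (#(S ∩ {1, 2}) : ℝ) ≤ 2 := by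
      exact_mod_cast (card_le_card inter_subset_right).trans (card_le_two (a := 1) (b := 2))
    simp [exampleObjective, inter_singleton_of_notMem h3]
    nlinarith

lemma three_mem_union_out (hN : 1 ≤ N) (hw1 : w 1 = N) (hw2 : w 2 = N) (hw3 : w 3 = 1)
    {G : Finset ℕ} (hG : G ⊆ {1, 2, 3}) (hGcard : #G ≤ 1)
    (g : GreedyExec {1, 2, 3} (fun S => exampleObjective N (G ∪ S) - exampleObjective N G) w
      (2 * N - wt w G)) :
    3 ∈ G ∪ g.out := by
  by_cases h3 : 3 ∈ G
  · exact mem_union_left _ h3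
  refine mem_union_right _ (g.mem_out_of_density_lt (by simp) ?_ ?_)
  · have : wt w G ≤ N := wt_le_of_card_le_one hGcard (by linarith) fun e he => by
      have := hG he
      simp only [mem_insert, mem_singleton] at this
      rcases this with rfl | rfl | rfl <;> linarith
    linarith
  · intro x hx hx3
    have hx12 : x ∈ ({1, 2} : Finset ℕ) := by simp at hx ⊢; omega
    have hwx : w x = N := by rcases mem_insert.mp hx12 with rfl | hx <;> simp_all
    simp only [marginal, empty_union, union_empty, sub_sub_sub_cancel_right]
    rw [exampleObjective.union_three_sub h3, hw3, hwx]
    calc (exampleObjective N (G ∪ {x}) - exampleObjective N G) / N ≤ N / N :=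
          div_le_div_of_nonneg_right (exampleObjective.union_singleton_sub_le (by linarith) G hx12)
            (by linarith)
      _ < 2 / 1 := by rw [div_self (by linarith)]; norm_num

end ExampleInstance

/-- EnumGreedy₁ is not a `(1 - e⁻¹)`-approximation. For every real
`N ≥ 8`, the MSK instance with `E = {1, 2, 3}`, `w(1) = w(2) = N`, `w(3) = 1`,
`W = 2N` and the modular function `f(S) = N·|S ∩ {1,2}| + 2·|S ∩ {3}|` has optimal
feasible value `f({1,2}) = 2N`, yet for every `G ⊆ E` with `|G| ≤ 1` and `w(G) ≤ W`
and every greedy execution on `(E, f_G, w, W - w(G))` with output `A`, we have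
`f(G ∪ A) ≤ N + 2 < (1 - e⁻¹)·2N`. -/
theorem enum_greedy_one_fails (N : ℝ) (hN : 8 ≤ N)
    (E : Finset ℕ) (hE : E = {1, 2, 3})
    (w : ℕ → ℝ) (hw1 : w 1 = N) (hw2 : w 2 = N) (hw3 : w 3 = 1)
    (f : Finset ℕ → ℝ)
    (hf : ∀ S : Finset ℕ,
      f S = N * ((S ∩ {1, 2}).card : ℝ) + 2 * ((S ∩ {3}).card : ℝ)) :
    f {1, 2} = 2 * N ∧
    IsGreatest {v : ℝ | ∃ S, S ⊆ E ∧ wt w S ≤ 2 * N ∧ f S = v} (2 * N) ∧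
    (∀ G ⊆ E, G.card ≤ 1 → wt w G ≤ 2 * N →
      ∀ g : GreedyExec E (fun S => f (G ∪ S) - f G) w (2 * N - wt w G),
        f (G ∪ g.out) ≤ N + 2) ∧
    N + 2 < (1 - Real.exp (-1)) * (2 * N) := by
  subst hE
  obtain rfl : f = exampleObjective N := funext hf
  have hw_nonneg : ∀ e ∈ ({1, 2, 3} : Finset ℕ), 0 ≤ w e := by
    simp only [mem_insert, mem_singleton]
    rintro e (rfl | rfl | rfl) <;> linarith
  refine ⟨exampleObjective.pair, ⟨⟨{1, 2}, by simp, ?_, exampleObjective.pair⟩, ?_⟩, ?_, ?_⟩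
  · simp [wt, hw1, hw2, two_mul]
  · rintro _ ⟨S, hS, hwS, rfl⟩
    exact exampleObjective_le_of_wt_le (by linarith) hw1 hw2 hw3 hS hwS
  · intro G hG hGcard hGw g
    have hwS : wt w (G ∪ g.out) ≤ 2 * N :=
      calc wt w (G ∪ g.out) ≤ wt w G + wt w g.out :=
            wt_union_le fun e he => hw_nonneg e (hG he)
        _ ≤ 2 * N := by linarith [g.wt_out_le (by linarith)]
    exact exampleObjective.le_of_not_pair_subset (by linarith) <|
      not_pair_subset_of_three_mem hw1 hw2 hw3 (union_subset hG g.out_subset_ground)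
        (three_mem_union_out (by linarith) hw1 hw2 hw3 hG hGcard g) hwS
  · nlinarith [exp_neg_one_lt_three_eighths]
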